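/- If the data-availability indicator D is conditionally independent of (X, A, Y) given the source indicator R, then the identifying functional admits the weighting representation among sampled units: Σ_x ℙ(X = x | R = false) · E[Y | X = x, A = a, R = true] = (1/ℙ(R = false | D = true)) · E[ (ℙ(R = false | X = X(ω), D = true) · 1{R = true, A = a}(ω) / (ℙ(A = a | X = X(ω), R = true, D = true) · ℙ(R = true | X = X(ω), D = true))) · Y(ω) | D = true ]. -/

import Mathlib

open Finset

attribute [local instance] Classical.propDecidable

variable {Ω : Type*}

/-- Probability of an event. -/
noncomputable def pr [Fintype Ω] (P : Ω → ℝ) (E : Ω → Prop) : ℝ :=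
  ∑ ω, if E ω then P ω else 0

/-- Expectation of a real random variable. -/
noncomputable def ex [Fintype Ω] (P : Ω → ℝ) (Z : Ω → ℝ) : ℝ :=
  ∑ ω, P ω * Z ω

/-- Conditional probability ℙ(F | E) = ℙ(F ∩ E)/ℙ(E). -/
noncomputable def cpr [Fintype Ω] (P : Ω → ℝ) (F E : Ω → Prop) : ℝ :=
  pr P (fun ω => F ω ∧ E ω) / pr P E

/-- Conditional expectation E[Z | E] = E[Z·1_E]/ℙ(E). -/
noncomputable def cex [Fintype Ω] (P : Ω → ℝ) (Z : Ω → ℝ) (E : Ω → Prop) : ℝ :=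
  (∑ ω, if E ω then P ω * Z ω else 0) / pr P E

/-!
Splitting the sum over sampled units by the value of `X`, the weight at `x` reduces to
`ℙ(R = false, X = x, D = true) / ℙ(A = a, X = x, R = true, D = true)`. Sampling within each
source multiplies the probability of every `(X, A, Y)`-event jointly with `R = r` (and every
`Y`-weighted sum over such an event) by the same factor `ℙ(D = true | R = r)` when `D = true` is
added. This turns the numerator into `ℙ(X = x, R = false) ℙ(D = true | R = false)`, and the two
factors `ℙ(D = true | R = true)` from the outcome sum and from the propensity cancel, while
`ℙ(R = false, D = true)` cancels against the normalising constant.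
-/
section
variable [Fintype Ω] (P : Ω → ℝ)

lemma pr_eq_sum_filter (E : Ω → Prop) [DecidablePred E] : pr P E = ∑ ω with E ω, P ω := by
  rw [Finset.sum_filter]
  exact Finset.sum_congr rfl fun ω _ => by congr

lemma pr_congr {E F : Ω → Prop} (h : ∀ ω, E ω ↔ F ω) : pr P E = pr P F := by
  simp only [pr, h]

variable {P}

lemma pr_mono (hP : ∀ ω, 0 ≤ P ω) {E F : Ω → Prop} (h : ∀ ω, E ω → F ω) :
    pr P E ≤ pr P F :=
  Finset.sum_le_sum fun ω _ => by
    by_cases hE : E ω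
    · simp [hE, h ω hE]
    · by_cases hF : F ω <;> simp [hE, hF, hP ω]

lemma pr_nonneg (hP : ∀ ω, 0 ≤ P ω) (E : Ω → Prop) : 0 ≤ pr P E := by
  simpa [pr] using pr_mono hP (E := fun _ => False) (F := E) (by simp)

lemma pr_eq_zero_of_imp (hP : ∀ ω, 0 ≤ P ω) {E F : Ω → Prop} (h : ∀ ω, E ω → F ω)
    (hF : pr P F = 0) : pr P E = 0 :=
  le_antisymm (hF ▸ pr_mono hP h) (pr_nonneg hP E)

lemma pr_pos_of_imp (hP : ∀ ω, 0 ≤ P ω) {E F : Ω → Prop} (h : ∀ ω, E ω → F ω)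
    (hE : 0 < pr P E) : 0 < pr P F :=
  hE.trans_le (pr_mono hP h)

end

section
variable [Fintype Ω] (P : Ω → ℝ) {β : Type*}

lemma sum_filter_mul_comp_eq_sum_fiber [Fintype β] [DecidableEq β] (V : Ω → β)
    (E : Ω → Prop) [DecidablePred E] (w : β → ℝ) (g : Ω → ℝ) :
    ∑ ω with E ω, w (V ω) * g ω = ∑ v, w v * ∑ ω with V ω = v ∧ E ω, g ω := by
  rw [← Finset.sum_fiberwise _ V]
  refine Finset.sum_congr rfl fun v _ => ?_
  rw [Finset.mul_sum, Finset.filter_filter]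
  refine Finset.sum_congr (Finset.filter_congr fun ω _ => and_comm) fun ω hω => ?_
  rw [(Finset.mem_filter.1 hω).2.1]

lemma sum_filter_comp_eq_sum_image_pr [DecidableEq β] (V : Ω → β) (S : β → Prop)
    [DecidablePred S] (E : Ω → Prop) [DecidablePred E] (f : β → ℝ) :
    ∑ ω with S (V ω) ∧ E ω, P ω * f (V ω)
      = ∑ v ∈ Finset.univ.image V with S v, f v * pr P (fun ω => V ω = v ∧ E ω) := by
  rw [← Finset.sum_fiberwise_of_maps_to (g := V) (t := {v ∈ Finset.univ.image V | S v})
    (fun ω hω => by simpa using (Finset.mem_filter.1 hω).2.1)]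
  refine Finset.sum_congr rfl fun v hv => ?_
  rw [pr_eq_sum_filter, Finset.mul_sum, Finset.filter_filter]
  have hS : S v := (Finset.mem_filter.1 hv).2
  refine Finset.sum_congr ?_ fun ω hω => ?_
  · ext ω
    simp only [Finset.mem_filter, Finset.mem_univ, true_and]
    exact ⟨fun h => ⟨h.2, h.1.2⟩, by rintro ⟨rfl, hE⟩; exact ⟨⟨hS, hE⟩, rfl⟩⟩
  · rw [(by simpa using hω : V ω = v ∧ E ω).1, mul_comm]

end

section
variable [Fintype Ω] {β : Type*}

/-- `ℙ(V = v, H | G) = ℙ(V = v | G) ℙ(H | G)` with denominators cleared, so that it also makes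
sense when `ℙ(G) = 0`. -/
def IndepGiven (P : Ω → ℝ) (V : Ω → β) (H G : Ω → Prop) : Prop :=
  ∀ v, pr P (fun ω => V ω = v ∧ H ω ∧ G ω) * pr P G
    = pr P (fun ω => V ω = v ∧ G ω) * pr P (fun ω => H ω ∧ G ω)

variable {P : Ω → ℝ} {V : Ω → β} {H G : Ω → Prop}

lemma IndepGiven.sum_filter_mul_pr_eq [DecidableEq β] [DecidablePred H] [DecidablePred G]
    (h : IndepGiven P V H G) (S : β → Prop) [DecidablePred S] (f : β → ℝ) :
    (∑ ω with S (V ω) ∧ H ω ∧ G ω, P ω * f (V ω)) * pr P G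
      = (∑ ω with S (V ω) ∧ G ω, P ω * f (V ω)) * pr P (fun ω => H ω ∧ G ω) := by
  rw [sum_filter_comp_eq_sum_image_pr P V S (fun ω => H ω ∧ G ω),
    sum_filter_comp_eq_sum_image_pr P V S G, Finset.sum_mul, Finset.sum_mul]
  exact Finset.sum_congr rfl fun v _ => by rw [mul_assoc, mul_assoc, h v]

lemma IndepGiven.pr_mul_pr_eq (h : IndepGiven P V H G) (S : β → Prop) :
    pr P (fun ω => S (V ω) ∧ H ω ∧ G ω) * pr P G
      = pr P (fun ω => S (V ω) ∧ G ω) * pr P (fun ω => H ω ∧ G ω) := by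
  simpa only [pr_eq_sum_filter, Pi.one_apply, mul_one] using h.sum_filter_mul_pr_eq S 1

end

lemma indepGiven_of_sampling [Fintype Ω] {𝒳 𝒯 : Type*} {P : Ω → ℝ} (hP : ∀ ω, 0 ≤ P ω)
    {X : Ω → 𝒳} {A : Ω → 𝒯} {Y : Ω → ℝ} {R D : Ω → Bool}
    (hsamp : ∀ r : Bool, 0 < pr P (fun ω => R ω = r) →
      ∀ x a' (y : ℝ) (d : Bool),
        cpr P (fun ω => X ω = x ∧ A ω = a' ∧ Y ω = y ∧ D ω = d) (fun ω => R ω = r)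
          = cpr P (fun ω => X ω = x ∧ A ω = a' ∧ Y ω = y) (fun ω => R ω = r)
            * cpr P (fun ω => D ω = d) (fun ω => R ω = r))
    (r : Bool) :
    IndepGiven P (fun ω => (X ω, A ω, Y ω)) (fun ω => D ω = true) (fun ω => R ω = r) := by
  rintro ⟨x, a', y⟩
  rcases (pr_nonneg hP fun ω => R ω = r).eq_or_lt with hr | hr
  · rw [← hr, pr_eq_zero_of_imp hP (fun ω (h : D ω = true ∧ R ω = r) => h.2) hr.symm]
    ring
  have h := hsamp r hr x a' y true
  simp only [cpr] at h
  simp only [Prod.mk.injEq]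
  rw [pr_congr P fun ω => show (X ω = x ∧ A ω = a' ∧ Y ω = y ∧ D ω = true) ∧ R ω = r
    ↔ (X ω = x ∧ A ω = a' ∧ Y ω = y) ∧ D ω = true ∧ R ω = r by tauto] at h
  field_simp at h
  linear_combination h

section
variable [Fintype Ω] (P : Ω → ℝ)

lemma cex_eq_sum_filter (Z : Ω → ℝ) (E : Ω → Prop) [DecidablePred E] :
    cex P Z E = (∑ ω with E ω, P ω * Z ω) / pr P E := by
  rw [cex, Finset.sum_filter]
  exact congrArg (· / pr P E) (Finset.sum_congr rfl fun ω _ => by congr)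

lemma cex_eq_sum_fiber {β : Type*} [Fintype β] [DecidableEq β] (V : Ω → β) (w : β → ℝ)
    (Z : Ω → ℝ) {Z' : Ω → ℝ} (E : Ω → Prop) [DecidablePred E]
    (hZ' : ∀ ω, Z' ω = w (V ω) * Z ω) :
    cex P Z' E = (∑ v, w v * ∑ ω with V ω = v ∧ E ω, P ω * Z ω) / pr P E := by
  simp only [cex_eq_sum_filter, hZ', ← sum_filter_mul_comp_eq_sum_fiber, mul_left_comm]

lemma sum_filter_mul_ite_one_mul (E F : Ω → Prop) [DecidablePred E] [DecidablePred F]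
    (Z : Ω → ℝ) :
    ∑ ω with E ω, P ω * ((if F ω then 1 else 0) * Z ω) = ∑ ω with E ω ∧ F ω, P ω * Z ω := by
  rw [← Finset.filter_filter, Finset.sum_filter F]
  refine Finset.sum_congr rfl fun ω _ => ?_
  split_ifs <;> ring

end

section
variable [Fintype Ω] {𝒳 𝒯 : Type*} (P : Ω → ℝ) (X : Ω → 𝒳) (A : Ω → 𝒯) (R D : Ω → Bool) (a : 𝒯)

noncomputable def transportWeight (x : 𝒳) : ℝ :=
  cpr P (fun ω => R ω = false) (fun ω => X ω = x ∧ D ω = true)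
    / (cpr P (fun ω => A ω = a) (fun ω => X ω = x ∧ R ω = true ∧ D ω = true)
      * cpr P (fun ω => R ω = true) (fun ω => X ω = x ∧ D ω = true))

variable {P X A R D a}

lemma transportWeight_eq_div (hP : ∀ ω, 0 ≤ P ω) {x : 𝒳}
    (hx : 0 < pr P (fun ω => A ω = a ∧ X ω = x ∧ R ω = true ∧ D ω = true)) :
    transportWeight P X A R D a x
      = pr P (fun ω => R ω = false ∧ X ω = x ∧ D ω = true)
        / pr P (fun ω => A ω = a ∧ X ω = x ∧ R ω = true ∧ D ω = true) := by
  have hxd : 0 < pr P fun ω => X ω = x ∧ D ω = true :=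
    pr_pos_of_imp hP (fun ω h => ⟨h.2.1, h.2.2.2⟩) hx
  have hxrd : 0 < pr P fun ω => X ω = x ∧ R ω = true ∧ D ω = true :=
    pr_pos_of_imp hP (fun ω h => h.2) hx
  simp only [transportWeight, cpr]
  rw [pr_congr P fun ω => show R ω = true ∧ X ω = x ∧ D ω = true
    ↔ X ω = x ∧ R ω = true ∧ D ω = true by tauto]
  field_simp

lemma transportWeight_mul_sum_eq_of_pos (hP : ∀ ω, 0 ≤ P ω) {Y : Ω → ℝ}
    (hind : ∀ r, IndepGiven P (fun ω => (X ω, A ω, Y ω)) (fun ω => D ω = true)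
      (fun ω => R ω = r))
    (hposT : 0 < pr P (fun ω => R ω = false ∧ D ω = true)) {x : 𝒳}
    (hx : 0 < pr P (fun ω => A ω = a ∧ X ω = x ∧ R ω = true ∧ D ω = true)) :
    transportWeight P X A R D a x
        * ∑ ω with (X ω = x ∧ D ω = true) ∧ R ω = true ∧ A ω = a, P ω * Y ω
      = pr P (fun ω => R ω = false ∧ D ω = true)
        * cpr P (fun ω => X ω = x) (fun ω => R ω = false)
        * cex P Y (fun ω => X ω = x ∧ A ω = a ∧ R ω = true) := by
  have htarget := (hind false).pr_mul_pr_eq fun v => v.1 = x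
  have htrial := (hind true).pr_mul_pr_eq fun v => v.1 = x ∧ v.2.1 = a
  have hsum := (hind true).sum_filter_mul_pr_eq (fun v => v.1 = x ∧ v.2.1 = a) fun v => v.2.2
  dsimp only at htarget htrial hsum
  have hc : 0 < pr P fun ω => (X ω = x ∧ A ω = a) ∧ D ω = true ∧ R ω = true :=
    pr_pos_of_imp hP (fun ω h => ⟨⟨h.2.1, h.1⟩, h.2.2.2, h.2.2.1⟩) hx
  have hp1 : 0 < pr P fun ω => R ω = true := pr_pos_of_imp hP (fun ω h => h.2.2) hc
  have hp0 : 0 < pr P fun ω => R ω = false := pr_pos_of_imp hP (fun ω h => h.1) hposT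
  have hq : 0 < pr P fun ω => (X ω = x ∧ A ω = a) ∧ R ω = true :=
    pr_pos_of_imp hP (fun ω h => ⟨h.1, h.2.2⟩) hc
  rw [transportWeight_eq_div hP hx, cpr, cex_eq_sum_filter,
    pr_congr P fun ω => show R ω = false ∧ X ω = x ∧ D ω = true
      ↔ X ω = x ∧ D ω = true ∧ R ω = false by tauto,
    pr_congr P fun ω => show A ω = a ∧ X ω = x ∧ R ω = true ∧ D ω = true
      ↔ (X ω = x ∧ A ω = a) ∧ D ω = true ∧ R ω = true by tauto,
    pr_congr P fun ω => show R ω = false ∧ D ω = true ↔ D ω = true ∧ R ω = false from and_comm,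
    pr_congr P fun ω => show X ω = x ∧ A ω = a ∧ R ω = true
      ↔ (X ω = x ∧ A ω = a) ∧ R ω = true from and_assoc.symm,
    Finset.filter_congr fun ω _ => show (X ω = x ∧ D ω = true) ∧ R ω = true ∧ A ω = a
      ↔ (X ω = x ∧ A ω = a) ∧ D ω = true ∧ R ω = true by tauto,
    Finset.filter_congr fun ω _ => show X ω = x ∧ A ω = a ∧ R ω = true
      ↔ (X ω = x ∧ A ω = a) ∧ R ω = true from and_assoc.symm]
  field_simp
  set N := ∑ ω with (X ω = x ∧ A ω = a) ∧ D ω = true ∧ R ω = true, P ω * Y ω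
  set T := ∑ ω with (X ω = x ∧ A ω = a) ∧ R ω = true, P ω * Y ω
  set a0 := pr P fun ω => X ω = x ∧ R ω = false
  set p0d := pr P fun ω => D ω = true ∧ R ω = false
  set q := pr P fun ω => (X ω = x ∧ A ω = a) ∧ R ω = true
  set p1 := pr P fun ω => R ω = true
  apply mul_right_cancel₀ hp1.ne'
  linear_combination (N * q * p1) * htarget + (a0 * p0d * q) * hsum - (a0 * p0d * T) * htrial

lemma transportWeight_mul_sum_eq (hP : ∀ ω, 0 ≤ P ω) {Y : Ω → ℝ}
    (hind : ∀ r, IndepGiven P (fun ω => (X ω, A ω, Y ω)) (fun ω => D ω = true)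
      (fun ω => R ω = r))
    (hposT : 0 < pr P (fun ω => R ω = false ∧ D ω = true))
    (hpos : ∀ x, 0 < pr P (fun ω => X ω = x) →
      0 < pr P (fun ω => A ω = a ∧ X ω = x ∧ R ω = true ∧ D ω = true)) (x : 𝒳) :
    transportWeight P X A R D a x
        * ∑ ω with (X ω = x ∧ D ω = true) ∧ R ω = true ∧ A ω = a, P ω * Y ω
      = pr P (fun ω => R ω = false ∧ D ω = true)
        * cpr P (fun ω => X ω = x) (fun ω => R ω = false)
        * cex P Y (fun ω => X ω = x ∧ A ω = a ∧ R ω = true) := by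
  rcases (pr_nonneg hP fun ω => X ω = x).eq_or_lt with hx | hx
  · have hzero {E : Ω → Prop} (hE : ∀ ω, E ω → X ω = x) : pr P E = 0 :=
      pr_eq_zero_of_imp hP hE hx.symm
    simp [transportWeight, cpr, hzero fun ω (h : _ ∧ _) => h.1,
      hzero fun ω (h : _ ∧ _ ∧ _) => h.2.1]
  · exact transportWeight_mul_sum_eq_of_pos hP hind hposT (hpos x hx)

end

theorem sampling_weighting_representation_general
    {𝒳 𝒯 : Type*} [Fintype Ω] [Fintype 𝒳]
    (P : Ω → ℝ) (hP0 : ∀ ω, 0 ≤ P ω)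
    (X : Ω → 𝒳) (A : Ω → 𝒯) (Y : Ω → ℝ) (R D : Ω → Bool) (a : 𝒯)
    -- sampling assumption: D independent of (X, A, Y) given R
    (hsamp : ∀ r : Bool, 0 < pr P (fun ω => R ω = r) →
      ∀ x a' (y : ℝ) (d : Bool),
        cpr P (fun ω => X ω = x ∧ A ω = a' ∧ Y ω = y ∧ D ω = d) (fun ω => R ω = r)
          = cpr P (fun ω => X ω = x ∧ A ω = a' ∧ Y ω = y) (fun ω => R ω = r)
            * cpr P (fun ω => D ω = d) (fun ω => R ω = r))
    -- positivity
    (hposT : 0 < pr P (fun ω => R ω = false ∧ D ω = true))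
    (hpos : ∀ x, 0 < pr P (fun ω => X ω = x) →
      0 < pr P (fun ω => A ω = a ∧ X ω = x ∧ R ω = true ∧ D ω = true)) :
    ∑ x, cpr P (fun ω => X ω = x) (fun ω => R ω = false)
          * cex P Y (fun ω => X ω = x ∧ A ω = a ∧ R ω = true)
      = (cpr P (fun ω => R ω = false) (fun ω => D ω = true))⁻¹
          * cex P (fun ω =>
              (cpr P (fun ω' => R ω' = false) (fun ω' => X ω' = X ω ∧ D ω' = true)
                  * (if R ω = true ∧ A ω = a then (1 : ℝ) else 0)
                / (cpr P (fun ω' => A ω' = a)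
                      (fun ω' => X ω' = X ω ∧ R ω' = true ∧ D ω' = true)
                    * cpr P (fun ω' => R ω' = true)
                        (fun ω' => X ω' = X ω ∧ D ω' = true)))
              * Y ω)
            (fun ω => D ω = true) := by
  have hind := indepGiven_of_sampling hP0 hsamp
  have hD : 0 < pr P fun ω => D ω = true := pr_pos_of_imp hP0 (fun ω h => h.2) hposT
  rw [cex_eq_sum_fiber P X (transportWeight P X A R D a)
    (fun ω => (if R ω = true ∧ A ω = a then 1 else 0) * Y ω)]
  · simp only [sum_filter_mul_ite_one_mul, transportWeight_mul_sum_eq hP0 hind hposT hpos,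
      mul_assoc, ← Finset.mul_sum]
    rw [cpr]
    field_simp
  · intro ω
    rw [transportWeight]
    ring

/-- Random sampling within each source gives the weighting representation
of the identifying functional among sampled units (D = true). -/
theorem sampling_weighting_representation
    {𝒳 𝒯 : Type*} [Fintype Ω] [Fintype 𝒳] [Fintype 𝒯]
    (P : Ω → ℝ) (hP0 : ∀ ω, 0 ≤ P ω) (hP1 : ∑ ω, P ω = 1)
    (X : Ω → 𝒳) (A : Ω → 𝒯) (Y : Ω → ℝ) (R D : Ω → Bool) (a : 𝒯)
    -- sampling assumption: D independent of (X, A, Y) given R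
    (hsamp : ∀ r : Bool, 0 < pr P (fun ω => R ω = r) →
      ∀ x a' (y : ℝ) (d : Bool),
        cpr P (fun ω => X ω = x ∧ A ω = a' ∧ Y ω = y ∧ D ω = d) (fun ω => R ω = r)
          = cpr P (fun ω => X ω = x ∧ A ω = a' ∧ Y ω = y) (fun ω => R ω = r)
            * cpr P (fun ω => D ω = d) (fun ω => R ω = r))
    -- positivity
    (hposT : 0 < pr P (fun ω => R ω = false ∧ D ω = true))
    (hpos : ∀ x, 0 < pr P (fun ω => X ω = x) →
      0 < pr P (fun ω => A ω = a ∧ X ω = x ∧ R ω = true ∧ D ω = true)) :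
    ∑ x, cpr P (fun ω => X ω = x) (fun ω => R ω = false)
          * cex P Y (fun ω => X ω = x ∧ A ω = a ∧ R ω = true)
      = (cpr P (fun ω => R ω = false) (fun ω => D ω = true))⁻¹
          * cex P (fun ω =>
              (cpr P (fun ω' => R ω' = false) (fun ω' => X ω' = X ω ∧ D ω' = true)
                  * (if R ω = true ∧ A ω = a then (1 : ℝ) else 0)
                / (cpr P (fun ω' => A ω' = a)
                      (fun ω' => X ω' = X ω ∧ R ω' = true ∧ D ω' = true)
                    * cpr P (fun ω' => R ω' = true)
                        (fun ω' => X ω' = X ω ∧ D ω' = true)))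
              * Y ω)
            (fun ω => D ω = true) :=
  sampling_weighting_representation_general P hP0 X A Y R D a hsamp hposT hpos
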